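/- arXiv:1104.4207 — 4 statements merged into one kernel-verified Lean document; each statement's English description precedes it below -/
import Mathlib

section
/- Every subchain of the free Boolean algebra on ℵ₁ generators is countable; consequently the free Boolean algebra on ℵ₁ generators is not generated (as a Boolean algebra) by any chain contained in it. -/
/-- A subset of a Boolean algebra closed under the Boolean operations. -/
def BoolClosed {B : Type*} [BooleanAlgebra B] (S : Set B) : Prop :=
  ⊥ ∈ S ∧ ⊤ ∈ S ∧ (∀ x ∈ S, xᶜ ∈ S) ∧ ∀ x ∈ S, ∀ y ∈ S, x ⊔ y ∈ S ∧ x ⊓ y ∈ S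

/-- The Boolean subalgebra generated by a subset, as a set. -/
def boolGen {B : Type*} [BooleanAlgebra B] (S : Set B) : Set B :=
  ⋂₀ {T : Set B | S ⊆ T ∧ BoolClosed T}

section Basic
variable {B : Type*} [BooleanAlgebra B]

lemma subset_boolGen (S : Set B) : S ⊆ boolGen S := fun a ha T hT => hT.1 ha

lemma boolGen_subset {S T : Set B} (h : S ⊆ T) (hT : BoolClosed T) : boolGen S ⊆ T :=
  fun a ha => ha T ⟨h, hT⟩

lemma boolClosed_boolGen (S : Set B) : BoolClosed (boolGen S) := by
  refine ⟨fun T hT => hT.2.1, fun T hT => hT.2.2.1, fun x hx T hT => hT.2.2.2.1 _ (hx T hT),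
    fun x hx y hy => ⟨fun T hT => (hT.2.2.2.2 _ (hx T hT) _ (hy T hT)).1,
      fun T hT => (hT.2.2.2.2 _ (hx T hT) _ (hy T hT)).2⟩⟩

lemma boolGen_mono {S T : Set B} (h : S ⊆ T) : boolGen S ⊆ boolGen T :=
  boolGen_subset (h.trans (subset_boolGen T)) (boolClosed_boolGen T)

lemma boolGen_countable {S : Set B} (hS : S.Countable) : (boolGen S).Countable := by
  let D : ℕ → Set B := fun n => Nat.rec (S ∪ {⊥, ⊤}) (fun _ Dn =>
    Dn ∪ compl '' Dn ∪ Set.image2 (· ⊔ ·) Dn Dn ∪ Set.image2 (· ⊓ ·) Dn Dn) n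
  have hDsucc : ∀ n, D (n+1) = D n ∪ compl '' D n ∪ Set.image2 (· ⊔ ·) (D n) (D n)
      ∪ Set.image2 (· ⊓ ·) (D n) (D n) := fun n => rfl
  have hDc : ∀ n, (D n).Countable := by
    intro n; induction n with
    | zero => exact hS.union ((Set.countable_singleton _).insert _)
    | succ n ih =>
      rw [hDsucc]
      exact ((ih.union (ih.image _)).union (ih.image2 ih _)).union (ih.image2 ih _)
  have hmono : ∀ m n, m ≤ n → D m ⊆ D n := by
    intro m n h
    induction h with
    | refl => exact subset_rfl
    | step _ ih =>
      refine ih.trans ?_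
      rw [hDsucc]
      intro x hx
      exact Or.inl (Or.inl (Or.inl hx))
  have hU : BoolClosed (⋃ n, D n) := by
    refine ⟨Set.mem_iUnion.2 ⟨0, Or.inr (Or.inl rfl)⟩,
      Set.mem_iUnion.2 ⟨0, Or.inr (Or.inr rfl)⟩, ?_, ?_⟩
    · rintro x hx
      obtain ⟨n, hn⟩ := Set.mem_iUnion.1 hx
      exact Set.mem_iUnion.2 ⟨n+1, by rw [hDsucc]; exact Or.inl (Or.inl (Or.inr ⟨x, hn, rfl⟩))⟩
    · rintro x hx y hy
      obtain ⟨m, hm⟩ := Set.mem_iUnion.1 hx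
      obtain ⟨n, hn⟩ := Set.mem_iUnion.1 hy
      have hm' := hmono m (max m n) (le_max_left _ _) hm
      have hn' := hmono n (max m n) (le_max_right _ _) hn
      have h1 : x ⊔ y ∈ D (max m n + 1) := by
        rw [hDsucc]; exact Or.inl (Or.inr ⟨x, hm', y, hn', rfl⟩)
      have h2 : x ⊓ y ∈ D (max m n + 1) := by
        rw [hDsucc]; exact Or.inr ⟨x, hm', y, hn', rfl⟩
      exact ⟨Set.mem_iUnion.2 ⟨max m n + 1, h1⟩, Set.mem_iUnion.2 ⟨max m n + 1, h2⟩⟩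
  have : boolGen S ⊆ ⋃ n, D n :=
    boolGen_subset (fun x hx => Set.mem_iUnion.2 ⟨0, Or.inl hx⟩) hU
  exact (Set.countable_iUnion hDc).mono this
end Basic

section Homs
variable {A B : Type*} [BooleanAlgebra A] [BooleanAlgebra B]

lemma hom_eqOn_boolGen (g h : BoundedLatticeHom A B) {S : Set A} (hS : ∀ x ∈ S, g x = h x) :
    ∀ a ∈ boolGen S, g a = h a := by
  have : BoolClosed {a : A | g a = h a} := by
    refine ⟨by simp, by simp, fun x hx => ?_, fun x hx y hy => ?_⟩
    · simp only [Set.mem_setOf_eq] at *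
      rw [map_compl', map_compl', hx]
    · simp only [Set.mem_setOf_eq] at *
      rw [map_sup, map_inf, map_sup, map_inf, hx, hy]
      exact ⟨rfl, rfl⟩
  exact fun a ha => boolGen_subset hS this ha

/-- Separation by a 2-valued homomorphism. -/
lemma exists_hom_bool_ne {a b : A} (hab : a ≠ b) :
    ∃ h : BoundedLatticeHom A Bool, h a ≠ h b := by
  classical
  set c : A := (a \ b) ⊔ (b \ a) with hc
  have hcbot : c ≠ ⊥ := by
    intro h
    rcases sup_eq_bot_iff.1 h with ⟨h1, h2⟩
    exact hab (le_antisymm (sdiff_eq_bot_iff.1 h1) (sdiff_eq_bot_iff.1 h2))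
  have hdisj : Disjoint ((Order.PFilter.principal c : Order.PFilter A) : Set A)
      ((Order.Ideal.principal (⊥ : A) : Order.Ideal A) : Set A) := by
    rw [Set.disjoint_left]
    intro z hz1 hz2
    have h1 : c ≤ z := hz1
    have h2 : z ≤ ⊥ := hz2
    exact hcbot (le_antisymm (h1.trans h2) bot_le)
  obtain ⟨J, hJprime, -, hJdisj⟩ :=
    DistribLattice.prime_ideal_of_disjoint_filter_ideal hdisj
  have hcJ : c ∉ J := Set.disjoint_left.1 hJdisj (by exact le_refl c)
  have hproper : (⊤ : A) ∉ J := fun h => hcJ (J.lower le_top h)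
  set f : A → Bool := fun z => if z ∈ J then false else true with hf
  have hsup : ∀ x y, f (x ⊔ y) = f x ⊔ f y := by
    intro x y
    by_cases hx : x ∈ J <;> by_cases hy : y ∈ J <;>
      simp [hf, hx, hy, Order.Ideal.sup_mem_iff]
  have hinf : ∀ x y, f (x ⊓ y) = f x ⊓ f y := by
    intro x y
    by_cases hx : x ∈ J
    · have : x ⊓ y ∈ J := J.lower inf_le_left hx
      simp [hf, hx, this]
    · by_cases hy : y ∈ J
      · have : x ⊓ y ∈ J := J.lower inf_le_right hy
        simp [hf, hx, hy, this]
      · have : x ⊓ y ∉ J := fun h => (hJprime.mem_or_mem h).elim hx hy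
        simp [hf, hx, hy, this]
  set h : BoundedLatticeHom A Bool :=
    ⟨⟨⟨f, fun x y => hsup x y⟩, fun x y => hinf x y⟩, by simp [hf, hproper],
      by simp [hf, J.bot_mem]⟩ with hh
  refine ⟨h, ?_⟩
  intro heq
  have hfc : h c = true := by simp [hh, hf, hcJ]
  have hzero : h c = false := by
    have : h c = h a \ h b ⊔ h b \ h a := by
      rw [hc, map_sup, map_sdiff', map_sdiff']
    rw [this, heq]
    simp
  rw [hfc] at hzero
  simp at hzero
end Homs

open scoped Classical

section Free
variable {F : Type} [BooleanAlgebra F] {X : Set F}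

/-- The evaluation homomorphism extending `f : X → Bool`. -/
noncomputable def evalHom
    (hfree : ∀ (B : Type) [BooleanAlgebra B] (f : X → B),
      ∃! g : BoundedLatticeHom F B, ∀ x : X, g (x : F) = f x)
    (f : X → Bool) : BoundedLatticeHom F Bool := (hfree Bool f).choose

variable (hfree : ∀ (B : Type) [BooleanAlgebra B] (f : X → B),
      ∃! g : BoundedLatticeHom F B, ∀ x : X, g (x : F) = f x)

lemma evalHom_spec (f : X → Bool) : ∀ x : X, evalHom hfree f (x : F) = f x :=
  (hfree Bool f).choose_spec.1

lemma evalHom_unique {f : X → Bool} (g : BoundedLatticeHom F Bool)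
    (hg : ∀ x : X, g (x : F) = f x) : g = evalHom hfree f :=
  (hfree Bool f).choose_spec.2 g hg

/-- Extend a valuation on a finite set to all of `X` by `false`. -/
noncomputable def extFun (s : Finset F) (w : {x : F // x ∈ s} → Bool) : X → Bool :=
  fun x => if hx : (x : F) ∈ s then w ⟨x, hx⟩ else false

/-- The number of valuations on `s` making `c` true. -/
noncomputable def nu (s : Finset F) (c : F) : ℕ :=
  {w : {x : F // x ∈ s} → Bool | evalHom hfree (extFun s w) c = true}.ncard

lemma evalHom_eq_of_eqOn {s : Finset F} (hs : ↑s ⊆ X) {c : F}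
    (hc : c ∈ boolGen (↑s : Set F)) (f f' : X → Bool)
    (h : ∀ x : X, (x : F) ∈ s → f x = f' x) :
    evalHom hfree f c = evalHom hfree f' c := by
  refine hom_eqOn_boolGen _ _ (fun z hz => ?_) c hc
  have hzX : z ∈ X := hs hz
  have h1 : evalHom hfree f z = f ⟨z, hzX⟩ := evalHom_spec hfree f ⟨z, hzX⟩
  have h2 : evalHom hfree f' z = f' ⟨z, hzX⟩ := evalHom_spec hfree f' ⟨z, hzX⟩
  rw [h1, h2, h ⟨z, hzX⟩ hz]

lemma nu_coherent {s s' : Finset F} (hss : s ⊆ s') (hs' : ↑s' ⊆ X) {c : F}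
    (hc : c ∈ boolGen (↑s : Set F)) :
    nu hfree s' c = nu hfree s c * 2 ^ (s'.card - s.card) := by
  have hs : (↑s : Set F) ⊆ X := fun x hx => hs' (hss hx)
  set ρ : ({x : F // x ∈ s'} → Bool) → ({x : F // x ∈ s} → Bool) :=
    fun w' x => w' ⟨x.1, hss x.2⟩ with hρ
  set T : Set ({x : F // x ∈ s} → Bool) :=
    {w | evalHom hfree (extFun s w) c = true} with hT
  have hset : {w' : {x : F // x ∈ s'} → Bool | evalHom hfree (extFun s' w') c = true}
      = ρ ⁻¹' T := by
    ext w'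
    simp only [Set.mem_setOf_eq, Set.mem_preimage, hT]
    constructor <;> intro hw
    · rw [← hw]
      refine (evalHom_eq_of_eqOn hfree hs hc _ _ (fun x hx => ?_)).symm
      simp only [extFun, dif_pos hx, dif_pos (hss hx), hρ]
    · rw [← hw]
      refine evalHom_eq_of_eqOn hfree hs hc _ _ (fun x hx => ?_)
      simp only [extFun, dif_pos hx, dif_pos (hss hx), hρ]
  have hequiv : (ρ ⁻¹' T) ≃ T × ({x : F // x ∈ s' \ s} → Bool) := by
    refine ⟨fun w' => ⟨⟨ρ w'.1, w'.2⟩, fun x => w'.1 ⟨x.1, (Finset.mem_sdiff.1 x.2).1⟩⟩,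
      fun p => ⟨fun x => if hx : x.1 ∈ s then p.1.1 ⟨x.1, hx⟩
        else p.2 ⟨x.1, Finset.mem_sdiff.2 ⟨x.2, hx⟩⟩, ?_⟩, ?_, ?_⟩
    · rw [Set.mem_preimage]
      have : ρ (fun x : {x : F // x ∈ s'} => if hx : x.1 ∈ s then p.1.1 ⟨x.1, hx⟩
          else p.2 ⟨x.1, Finset.mem_sdiff.2 ⟨x.2, hx⟩⟩) = p.1.1 := by
        funext x
        simp only [hρ, dif_pos x.2]
      rw [this]
      exact p.1.2
    · intro w'
      ext x
      · simp only [hρ]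
        by_cases hx : x.1 ∈ s
        · simp [dif_pos hx]
        · simp [dif_neg hx]
    · intro p
      ext x
      · simp [hρ, dif_pos x.2]
      · simp [dif_neg (Finset.mem_sdiff.1 x.2).2]
  have hcard : (ρ ⁻¹' T).ncard = T.ncard * 2 ^ (s'.card - s.card) := by
    have h1 : (ρ ⁻¹' T).ncard = Nat.card (ρ ⁻¹' T) := (Nat.card_coe_set_eq _).symm
    have h2 : T.ncard = Nat.card T := (Nat.card_coe_set_eq _).symm
    rw [h1, h2, Nat.card_congr hequiv, Nat.card_prod]
    congr 1
    letI := Classical.decEq F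
    rw [Nat.card_eq_fintype_card, Fintype.card_fun, Fintype.card_coe, Fintype.card_bool,
      Finset.card_sdiff_of_subset hss]
  rw [nu, nu, hset, hcard]

lemma nu_lt {s : Finset F} (hs : ↑s ⊆ X) {a b : F}
    (ha : a ∈ boolGen (↑s : Set F)) (hb : b ∈ boolGen (↑s : Set F)) (hab : a < b) :
    nu hfree s a < nu hfree s b := by
  set Sa := {w : {x : F // x ∈ s} → Bool | evalHom hfree (extFun s w) a = true} with hSa
  set Sb := {w : {x : F // x ∈ s} → Bool | evalHom hfree (extFun s w) b = true} with hSb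
  have hsub : Sa ⊆ Sb := by
    intro w hw
    have hle : evalHom hfree (extFun s w) a ≤ evalHom hfree (extFun s w) b := by
      have h1 : evalHom hfree (extFun s w) (a ⊔ b)
          = evalHom hfree (extFun s w) a ⊔ evalHom hfree (extFun s w) b := map_sup _ a b
      rw [sup_eq_right.2 hab.le] at h1
      rw [h1]
      exact le_sup_left
    have hw' : evalHom hfree (extFun s w) a = true := hw
    show evalHom hfree (extFun s w) b = true
    rw [hw'] at hle
    exact le_antisymm (Bool.le_true _) hle
  have hne : ∃ w, w ∈ Sb ∧ w ∉ Sa := by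
    obtain ⟨h, hhab⟩ := exists_hom_bool_ne hab.ne
    set f : X → Bool := fun x => h (x : F) with hf
    have hEf : h = evalHom hfree f := evalHom_unique hfree h (fun x => rfl)
    set w : {x : F // x ∈ s} → Bool := fun x => f ⟨x.1, hs x.2⟩ with hw
    have hagree : ∀ c ∈ boolGen (↑s : Set F),
        evalHom hfree (extFun s w) c = h c := by
      intro c hc
      rw [hEf]
      refine evalHom_eq_of_eqOn hfree hs hc _ _ (fun x hx => ?_)
      simp only [extFun, dif_pos hx, hw]
    have hle : h a ≤ h b := by
      have h1 : h (a ⊔ b) = h a ⊔ h b := map_sup h a b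
      rw [sup_eq_right.2 hab.le] at h1
      rw [h1]; exact le_sup_left
    have hvals : h a = false ∧ h b = true := by
      cases hA : h a <;> cases hB : h b
      · exact absurd (hA.trans hB.symm) hhab
      · exact ⟨rfl, rfl⟩
      · rw [hA, hB] at hle
        exact absurd hle (by simp [Bool.le_iff_imp])
      · exact absurd (hA.trans hB.symm) hhab
    refine ⟨w, ?_, ?_⟩
    · simp only [hSb, Set.mem_setOf_eq, hagree b hb, hvals.2]
    · simp only [hSa, Set.mem_setOf_eq, hagree a ha, hvals.1]
      simp
  obtain ⟨w, hwb, hwa⟩ := hne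
  have hssub : Sa ⊂ Sb := ⟨hsub, fun h => hwa (h hwb)⟩
  exact Set.ncard_lt_ncard hssub (Set.toFinite _)

/-- Every element has a finite support. -/
lemma exists_support (hgen : boolGen X = Set.univ) (a : F) :
    ∃ s : Finset F, ↑s ⊆ X ∧ a ∈ boolGen (↑s : Set F) := by
  set U : Set F := {a | ∃ s : Finset F, ↑s ⊆ X ∧ a ∈ boolGen (↑s : Set F)} with hU
  have hXU : X ⊆ U := by
    intro x hx
    exact ⟨{x}, by simpa using hx, subset_boolGen _ (by simp)⟩
  have hclosed : BoolClosed U := by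
    refine ⟨⟨∅, by simp, (boolClosed_boolGen _).1⟩, ⟨∅, by simp, (boolClosed_boolGen _).2.1⟩,
      ?_, ?_⟩
    · rintro x ⟨s, hsX, hx⟩
      exact ⟨s, hsX, (boolClosed_boolGen _).2.2.1 _ hx⟩
    · rintro x ⟨s, hsX, hx⟩ y ⟨t, htX, hy⟩
      have hx' : x ∈ boolGen (↑(s ∪ t) : Set F) := by
        refine boolGen_mono ?_ hx
        simp only [Finset.coe_union]
        exact Set.subset_union_left
      have hy' : y ∈ boolGen (↑(s ∪ t) : Set F) := by
        refine boolGen_mono ?_ hy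
        simp only [Finset.coe_union]
        exact Set.subset_union_right
      have hst : (↑(s ∪ t) : Set F) ⊆ X := by
        simp only [Finset.coe_union]
        exact Set.union_subset hsX htX
      exact ⟨⟨s ∪ t, hst, ((boolClosed_boolGen _).2.2.2 _ hx' _ hy').1⟩,
        ⟨s ∪ t, hst, ((boolClosed_boolGen _).2.2.2 _ hx' _ hy').2⟩⟩
  have : boolGen X ⊆ U := boolGen_subset hXU hclosed
  rw [hgen] at this
  exact this (Set.mem_univ a)

lemma ratio_eq {s s' : Finset F} (hss : s ⊆ s') (hs' : ↑s' ⊆ X) {c : F}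
    (hc : c ∈ boolGen (↑s : Set F)) :
    (nu hfree s c : ℚ) / 2 ^ s.card = (nu hfree s' c : ℚ) / 2 ^ s'.card := by
  have hcard : s.card + (s'.card - s.card) = s'.card :=
    Nat.add_sub_cancel' (Finset.card_le_card hss)
  rw [nu_coherent hfree hss hs' hc]
  have hcard2 : (2:ℚ) ^ s'.card = 2 ^ s.card * 2 ^ (s'.card - s.card) := by
    rw [← pow_add, hcard]
  rw [hcard2]
  push_cast
  have hne : (2:ℚ) ^ (s'.card - s.card) ≠ 0 := by positivity
  field_simp
end Free

/-- Every chain in the free Boolean algebra on `ℵ₁` generators is countable;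
consequently that algebra is not generated by any chain. -/
theorem statement0 (F : Type) [BooleanAlgebra F] (X : Set F)
    (hX : Cardinal.mk X = Cardinal.aleph 1)
    (hgen : boolGen X = Set.univ)
    (hfree : ∀ (B : Type) [BooleanAlgebra B] (f : X → B),
      ∃! g : BoundedLatticeHom F B, ∀ x : X, g (x : F) = f x) :
    (∀ C : Set F, IsChain (· ≤ ·) C → C.Countable) ∧
      ¬ ∃ C : Set F, IsChain (· ≤ ·) C ∧ boolGen C = Set.univ := by
  have hsupp := fun a : F => exists_support hgen a
  choose supp hsuppX hsuppGen using hsupp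
  set μ : F → ℚ := fun a => (nu hfree (supp a) a : ℚ) / 2 ^ (supp a).card with hμ
  have hmono : ∀ a b : F, a < b → μ a < μ b := by
    intro a b hab
    set s : Finset F := supp a ∪ supp b with hs
    have hsX : (↑s : Set F) ⊆ X := by
      simp only [hs, Finset.coe_union]
      exact Set.union_subset (hsuppX a) (hsuppX b)
    have ha' : a ∈ boolGen (↑s : Set F) := by
      refine boolGen_mono ?_ (hsuppGen a)
      simp only [hs, Finset.coe_union]
      exact Set.subset_union_left
    have hb' : b ∈ boolGen (↑s : Set F) := by
      refine boolGen_mono ?_ (hsuppGen b)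
      simp only [hs, Finset.coe_union]
      exact Set.subset_union_right
    have hEa : μ a = (nu hfree s a : ℚ) / 2 ^ s.card :=
      ratio_eq hfree Finset.subset_union_left hsX (hsuppGen a)
    have hEb : μ b = (nu hfree s b : ℚ) / 2 ^ s.card :=
      ratio_eq hfree Finset.subset_union_right hsX (hsuppGen b)
    rw [hEa, hEb]
    have hlt : nu hfree s a < nu hfree s b := nu_lt hfree hsX ha' hb' hab
    gcongr
  have part1 : ∀ C : Set F, IsChain (· ≤ ·) C → C.Countable := by
    intro C hC
    have hinj : Function.Injective (fun c : C => μ c) := by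
      rintro ⟨c, hc⟩ ⟨d, hd⟩ hcd
      simp only at hcd
      by_contra hne
      have hne' : c ≠ d := fun h => hne (Subtype.ext h)
      rcases hC hc hd hne' with h | h
      · exact absurd hcd (ne_of_lt (hmono c d (lt_of_le_of_ne h hne')))
      · exact absurd hcd.symm (ne_of_lt (hmono d c (lt_of_le_of_ne h hne'.symm)))
    have : Countable C := hinj.countable
    exact Set.countable_coe_iff.1 this
  refine ⟨part1, ?_⟩
  rintro ⟨C, hCchain, hCgen⟩
  have hCc : C.Countable := part1 C hCchain
  have huniv : (Set.univ : Set F).Countable := hCgen ▸ boolGen_countable hCc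
  have hXc : X.Countable := huniv.mono (Set.subset_univ X)
  have : Cardinal.mk X ≤ Cardinal.aleph0 := by
    have := hXc.to_subtype
    exact Cardinal.mk_le_aleph0
  rw [hX] at this
  exact absurd this (not_le.2 (by exact_mod_cast Cardinal.aleph0_lt_aleph_one))
end

section
/- In the setting of the previous natural-transformation lemma, the key step: if i ≤ j in I, α is a compact congruence of G_i contained in θ_i, and χ_i = τ_i ∘ Conc p_i with τ_i an isomorphism (similarly for j), then (Conc g_i^j)(α) ⊆ θ_j. Consequently (x, y) ∈ θ_i implies (g_i^j(x), g_i^j(y)) ∈ θ_j. -/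
open FirstOrder FirstOrder.Language FirstOrder.Language.Structure

/-- A congruence of a first-order structure: an equivalence relation compatible
with all the operations. -/
structure AlgCon (L : Language) (A : Type*) [L.Structure A] where
  r : A → A → Prop
  refl : ∀ a, r a a
  symm : ∀ {a b}, r a b → r b a
  trans : ∀ {a b c}, r a b → r b c → r a c
  compat : ∀ {n} (f : L.Functions n) (x y : Fin n → A),
    (∀ i, r (x i) (y i)) → r (funMap f x) (funMap f y)

namespace AlgCon

open scoped Classical

noncomputable section

variable {L : Language} {A B : Type*} [L.Structure A] [L.Structure B]

theorem ext' {c d : AlgCon L A} (h : c.r = d.r) : c = d := by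
  cases c; cases d; cases h; rfl

instance : PartialOrder (AlgCon L A) where
  le c d := ∀ a b, c.r a b → d.r a b
  le_refl c a b h := h
  le_trans c d e h h' a b hab := h' a b (h a b hab)
  le_antisymm c d h h' := ext' (funext fun a => funext fun b =>
    propext ⟨h a b, h' a b⟩)

/-- The congruence generated by a binary relation. -/
def conGen (L : Language) (A : Type*) [L.Structure A] (s : A → A → Prop) :
    AlgCon L A where
  r a b := ∀ c : AlgCon L A, (∀ x y, s x y → c.r x y) → c.r a b
  refl a c _ := c.refl a
  symm h c hc := c.symm (h c hc)
  trans h h' c hc := c.trans (h c hc) (h' c hc)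
  compat f x y h c hc := c.compat f x y fun i => h i c hc

theorem conGen_le {s : A → A → Prop} {c : AlgCon L A}
    (h : ∀ a b, s a b → c.r a b) : conGen L A s ≤ c :=
  fun a b hab => hab c h

theorem self_le_conGen (s : A → A → Prop) {a b : A} (h : s a b) :
    (conGen L A s).r a b := fun c hc => hc a b h

/-- The trivial (diagonal) congruence. -/
def botCon (L : Language) (A : Type*) [L.Structure A] : AlgCon L A where
  r a b := a = b
  refl _ := rfl
  symm h := h.symm
  trans h h' := h.trans h'
  compat f x y h := congrArg (funMap f) (funext h)

instance : OrderBot (AlgCon L A) where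
  bot := botCon L A
  bot_le c a b h := h ▸ c.refl a

theorem conGen_empty :
    conGen L A (fun a b => (a, b) ∈ (∅ : Finset (A × A))) = botCon L A :=
  le_antisymm (conGen_le (by simp)) (fun a b h => h ▸ (conGen L A _).refl a)

/-- A congruence is compact (finitely generated) if it is generated by a finite
set of pairs. -/
def FinGenCon (c : AlgCon L A) : Prop :=
  ∃ s : Finset (A × A), c = conGen L A fun a b => (a, b) ∈ s

/-- `Conc L A` : the (∨,0)-semilattice of compact congruences of `A`. -/
abbrev Conc (L : Language) (A : Type*) [L.Structure A] :=
  {c : AlgCon L A // FinGenCon c}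

theorem botCon_finGen : FinGenCon (botCon L A) := ⟨∅, conGen_empty.symm⟩

instance : OrderBot (Conc L A) where
  bot := ⟨botCon L A, botCon_finGen⟩
  bot_le c := bot_le (a := c.val)

/-- Join of two congruences. -/
def supCon (c d : AlgCon L A) : AlgCon L A :=
  conGen L A fun a b => c.r a b ∨ d.r a b

theorem supCon_finGen {c d : AlgCon L A} (hc : FinGenCon c) (hd : FinGenCon d) :
    FinGenCon (supCon c d) := by
  obtain ⟨s, rfl⟩ := hc
  obtain ⟨t, rfl⟩ := hd
  refine ⟨s ∪ t, le_antisymm (conGen_le ?_) (conGen_le ?_)⟩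
  · rintro a b (h | h)
    · exact h _ fun x y hxy => self_le_conGen _ (Finset.mem_union_left _ hxy)
    · exact h _ fun x y hxy => self_le_conGen _ (Finset.mem_union_right _ hxy)
  · intro a b hab
    rcases Finset.mem_union.1 hab with h | h
    · exact self_le_conGen _ (Or.inl (self_le_conGen _ h))
    · exact self_le_conGen _ (Or.inr (self_le_conGen _ h))

instance : SemilatticeSup (Conc L A) where
  sup c d := ⟨supCon c.val d.val, supCon_finGen c.2 d.2⟩
  le_sup_left c d a b h := self_le_conGen _ (Or.inl h)
  le_sup_right c d a b h := self_le_conGen _ (Or.inr h)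
  sup_le c d e hc hd := conGen_le (by
    rintro a b (h | h)
    · exact hc a b h
    · exact hd a b h)

/-- Direct image of a congruence under a homomorphism: the congruence of the
codomain generated by the image. -/
def conMap (f : A →[L] B) (c : AlgCon L A) : AlgCon L B :=
  conGen L B fun x y => ∃ a b, c.r a b ∧ f a = x ∧ f b = y

/-- Inverse image of a congruence under a homomorphism. -/
def comap (f : A →[L] B) (c : AlgCon L B) : AlgCon L A where
  r a b := c.r (f a) (f b)
  refl a := c.refl _
  symm h := c.symm h
  trans h h' := c.trans h h'
  compat φ x y h := by
    show c.r (f (funMap φ x)) (f (funMap φ y))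
    rw [f.map_fun, f.map_fun]
    exact c.compat φ _ _ h

theorem conMap_le_iff {f : A →[L] B} {c : AlgCon L A} {d : AlgCon L B} :
    conMap f c ≤ d ↔ c ≤ comap f d :=
  ⟨fun h a b hab => h _ _ (self_le_conGen _ ⟨a, b, hab, rfl, rfl⟩),
   fun h => conGen_le (by rintro x y ⟨a, b, hab, rfl, rfl⟩; exact h a b hab)⟩

theorem conMap_finGen (f : A →[L] B) {c : AlgCon L A} (hc : FinGenCon c) :
    FinGenCon (conMap f c) := by
  obtain ⟨s, rfl⟩ := hc
  refine ⟨s.image (Prod.map f f), le_antisymm ?_ (conGen_le ?_)⟩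
  · refine conMap_le_iff.2 (conGen_le fun a b hab => ?_)
    exact self_le_conGen _ (Finset.mem_image.2 ⟨(a, b), hab, rfl⟩)
  · rintro x y hxy
    rcases Finset.mem_image.1 hxy with ⟨⟨a, b⟩, hab, heq⟩
    obtain ⟨rfl, rfl⟩ := Prod.mk.injEq .. ▸ And.intro (congrArg Prod.fst heq) (congrArg Prod.snd heq)
    exact self_le_conGen _ ⟨a, b, self_le_conGen _ hab, rfl, rfl⟩

/-- The action of the `Conc` functor on a homomorphism. -/
def concMap (f : A →[L] B) (c : Conc L A) : Conc L B :=
  ⟨conMap f c.val, conMap_finGen f c.2⟩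

theorem conMap_sup (f : A →[L] B) (c d : AlgCon L A) :
    conMap f (supCon c d) = supCon (conMap f c) (conMap f d) := by
  refine le_antisymm (conMap_le_iff.2 (conGen_le ?_)) (conGen_le ?_)
  · rintro a b (h | h)
    · exact self_le_conGen _ (Or.inl (self_le_conGen _ ⟨a, b, h, rfl, rfl⟩))
    · exact self_le_conGen _ (Or.inr (self_le_conGen _ ⟨a, b, h, rfl, rfl⟩))
  · rintro x y (h | h)
    · refine h _ ?_
      rintro u v ⟨a, b, hab, rfl, rfl⟩
      exact self_le_conGen _ ⟨a, b, self_le_conGen _ (Or.inl hab), rfl, rfl⟩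
    · refine h _ ?_
      rintro u v ⟨a, b, hab, rfl, rfl⟩
      exact self_le_conGen _ ⟨a, b, self_le_conGen _ (Or.inr hab), rfl, rfl⟩

theorem conMap_bot (f : A →[L] B) : conMap f (botCon L A) = botCon L B := by
  refine le_antisymm (conGen_le ?_) (bot_le (a := conMap f (botCon L A)))
  rintro x y ⟨a, b, rfl, rfl, rfl⟩
  rfl

/-- `Conc f` as a (∨,0)-homomorphism. -/
def concHom (f : A →[L] B) : SupBotHom (Conc L A) (Conc L B) where
  toFun := concMap f
  map_sup' c d := Subtype.ext (conMap_sup f c.val d.val)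
  map_bot' := Subtype.ext (conMap_bot f)

/-- The setoid underlying a congruence. -/
def toSetoid (c : AlgCon L A) : Setoid A := ⟨c.r, c.refl, c.symm, c.trans⟩

/-- A congruence gives a prestructure, hence a structure on the quotient. -/
instance prestructure [∀ n, IsEmpty (L.Relations n)] (c : AlgCon L A) :
    L.Prestructure (toSetoid c) where
  toStructure := inferInstance
  fun_equiv x y h := c.compat _ x y h
  rel_equiv := by intro n r _ _ _; exact isEmptyElim r

/-- The canonical projection onto the quotient, as a homomorphism. -/
def mkHom [∀ n, IsEmpty (L.Relations n)] (c : AlgCon L A) :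
    A →[L] Quotient (toSetoid c) where
  toFun := Quotient.mk (toSetoid c)
  map_fun' f x := (funMap_quotient_mk' (toSetoid c) f x).symm
  map_rel' r x h := ((relMap_quotient_mk' (toSetoid c) r x).2 h)

end

end AlgCon


open AlgCon in
/-- Key step of the natural-transformation lemma: any compact congruence below
`θ₁` is pushed by `g` below `θ₂`; consequently `g` maps `θ₁`-classes into
`θ₂`-classes. -/
theorem statement11 (L : Language) [∀ n, IsEmpty (L.Relations n)]
    (G₁ G₂ : Type) [L.Structure G₁] [L.Structure G₂] (g : G₁ →[L] G₂)
    (θ₁ : AlgCon L G₁) (θ₂ : AlgCon L G₂)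
    (D₁ D₂ : Type) [SemilatticeSup D₁] [OrderBot D₁] [SemilatticeSup D₂] [OrderBot D₂]
    (d : SupBotHom D₁ D₂)
    (χ₁ : SupBotHom (Conc L G₁) D₁) (χ₂ : SupBotHom (Conc L G₂) D₂)
    (τ₁ : Conc L (Quotient (toSetoid θ₁)) ≃o D₁)
    (τ₂ : Conc L (Quotient (toSetoid θ₂)) ≃o D₂)
    (hnat : ∀ c : Conc L G₁, d (χ₁ c) = χ₂ (concMap g c))
    (hfact₁ : ∀ c : Conc L G₁, χ₁ c = τ₁ (concMap (mkHom θ₁) c))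
    (hfact₂ : ∀ c : Conc L G₂, χ₂ c = τ₂ (concMap (mkHom θ₂) c)) :
    (∀ c : AlgCon L G₁, FinGenCon c → c ≤ θ₁ → conMap g c ≤ θ₂) ∧
      ∀ x y : G₁, θ₁.r x y → θ₂.r (g x) (g y) := by

  have comap_bot : ∀ {A : Type} [inst : L.Structure A] (θ : AlgCon L A),
      comap (mkHom θ) (botCon L (Quotient (toSetoid θ))) = θ := by
    intro A inst θ
    refine ext' (funext fun a => funext fun b => propext ?_)
    exact ⟨fun h => Quotient.exact h, fun h => Quotient.sound h⟩
  have key : ∀ c : AlgCon L G₁, FinGenCon c → c ≤ θ₁ → conMap g c ≤ θ₂ := by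
    intro c hfg hle
    -- concMap (mkHom θ₁) ⟨c, hfg⟩ = ⊥
    have h1 : concMap (mkHom θ₁) ⟨c, hfg⟩ = ⊥ := by
      apply Subtype.ext
      apply le_antisymm
      · show conMap (mkHom θ₁) c ≤ botCon L _
        rw [conMap_le_iff, comap_bot θ₁]
        exact hle
      · exact bot_le (a := conMap (mkHom θ₁) c)
    have h2 : χ₁ ⟨c, hfg⟩ = ⊥ := by
      rw [hfact₁, h1]
      exact map_bot τ₁
    have h3 : χ₂ (concMap g ⟨c, hfg⟩) = ⊥ := by
      rw [← hnat, h2]; exact map_bot d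
    have h4 : concMap (mkHom θ₂) (concMap g ⟨c, hfg⟩) = ⊥ := by
      have := hfact₂ (concMap g ⟨c, hfg⟩)
      rw [h3] at this
      have hb : τ₂ (concMap (mkHom θ₂) (concMap g ⟨c, hfg⟩)) = τ₂ ⊥ := by
        rw [← this, map_bot]
      exact τ₂.injective hb
    have h5 : conMap (mkHom θ₂) (conMap g c) = botCon L _ :=
      congrArg Subtype.val h4
    have h6 : conMap g c ≤ comap (mkHom θ₂) (botCon L _) := by
      rw [← conMap_le_iff, h5]
    rwa [comap_bot θ₂] at h6
  refine ⟨key, fun x y hxy => ?_⟩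
  set c := conGen L G₁ (fun a b => (a, b) ∈ ({(x, y)} : Finset (G₁ × G₁))) with hc
  have hfg : FinGenCon c := ⟨_, rfl⟩
  have hle : c ≤ θ₁ := conGen_le (by
    intro a b hab
    simp only [Finset.mem_singleton, Prod.mk.injEq] at hab
    obtain ⟨rfl, rfl⟩ := hab
    exact hxy)
  have := key c hfg hle
  exact this _ _ (self_le_conGen _ ⟨x, y, self_le_conGen _ (Finset.mem_singleton_self _), rfl, rfl⟩)
end

section
/- Let I be a finite lattice with least element 0 and greatest element 1, let 𝒫 = { P ⊆ I : |P| ≤ 2 or P = I } ordered by inclusion, and let (B_P, β_P^Q)_{P⊆Q in 𝒫} be a 𝒫-indexed diagram of algebras such that β_{{j}}^{{i,j}} is an isomorphism for all i ≤ j in I. Define C_i = B_{{i}} and g_i^j = (β_{{j}}^{{i,j}})^{-1} ∘ β_{{i}}^{{i,j}} for i ≤ j in I. If moreover β_{{k}}^{I} is injective for every k ∈ I, then (C_i, g_i^j)_{i ≤ j in I} is an I-indexed diagram, i.e., g_i^i = id and g_j^k ∘ g_i^j = g_i^k for all i ≤ j ≤ k in I. -/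
/-- The poset `𝒫 = {P ⊆ I : |P| ≤ 2 or P = I}`, ordered by inclusion. -/
def PP (I : Type*) := {P : Set I // P.ncard ≤ 2 ∨ P = Set.univ}

theorem mem_sing {I : Type*} (i : I) :
    ({i} : Set I).ncard ≤ 2 ∨ ({i} : Set I) = Set.univ :=
  Or.inl (by simp)

theorem mem_pair {I : Type*} (i j : I) :
    ({i, j} : Set I).ncard ≤ 2 ∨ ({i, j} : Set I) = Set.univ := by
  refine Or.inl ?_
  rcases eq_or_ne i j with rfl | h
  · simp [Set.pair_eq_singleton]
  · simp [Set.ncard_pair h]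

/-- `{i}` as an element of `𝒫`. -/
def sing {I : Type*} (i : I) : PP I := ⟨{i}, mem_sing i⟩

/-- `{i, j}` as an element of `𝒫`. -/
def pair {I : Type*} (i j : I) : PP I := ⟨{i, j}, mem_pair i j⟩

/-- `I` itself (the top element) as an element of `𝒫`. -/
def full (I : Type*) : PP I := ⟨Set.univ, Or.inr rfl⟩

theorem sing_subset_pair_right {I : Type*} (i j : I) :
    (sing j).val ⊆ (pair i j).val := by
  intro x hx; rcases hx with rfl; exact Or.inr rfl

theorem sing_subset_pair_left {I : Type*} (i j : I) :
    (sing i).val ⊆ (pair i j).val := by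
  intro x hx; rcases hx with rfl; exact Or.inl rfl

theorem sing_subset_full {I : Type*} (i : I) :
    (sing i).val ⊆ (full I).val := Set.subset_univ _

open FirstOrder FirstOrder.Language in
/-- Given a `𝒫`-indexed diagram `B⃗` of algebras in which each `β_{{j}}^{{i,j}}`
is an isomorphism and each `β_{{k}}^{I}` is injective, the maps
`g_i^j = (β_{{j}}^{{i,j}})⁻¹ ∘ β_{{i}}^{{i,j}}` form an `I`-indexed diagram. -/
theorem statement12 (L : Language) (I : Type) [Lattice I] [Fintype I] [BoundedOrder I]
    (B : PP I → Type) [∀ P, L.Structure (B P)]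
    (β : ∀ P Q : PP I, P.val ⊆ Q.val → (B P →[L] B Q))
    (hβid : ∀ P : PP I, β P P subset_rfl = Hom.id L (B P))
    (hβcomp : ∀ (P Q R : PP I) (hPQ : P.val ⊆ Q.val) (hQR : Q.val ⊆ R.val),
      (β Q R hQR).comp (β P Q hPQ) = β P R (hPQ.trans hQR))
    (hbij : ∀ i j : I, i ≤ j →
      Function.Bijective (β (sing j) (pair i j) (sing_subset_pair_right i j)))
    (hinj : ∀ k : I, Function.Injective (β (sing k) (full I) (sing_subset_full k))) :
    ∀ g : ∀ i j : I, i ≤ j → (B (sing i) → B (sing j)),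
      (∀ (i j : I) (hij : i ≤ j) (x : B (sing i)),
        g i j hij x =
          (Equiv.ofBijective _ (hbij i j hij)).symm
            (β (sing i) (pair i j) (sing_subset_pair_left i j) x)) →
      (∀ (i : I) (x : B (sing i)), g i i le_rfl x = x) ∧
      ∀ (i j k : I) (hij : i ≤ j) (hjk : j ≤ k) (x : B (sing i)),
        g j k hjk (g i j hij x) = g i k (hij.trans hjk) x := by
  intro g hg
  have key : ∀ (i j : I) (hij : i ≤ j) (x : B (sing i)),
      β (sing j) (full I) (sing_subset_full j) (g i j hij x) =
      β (sing i) (full I) (sing_subset_full i) x := by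
    intro i j hij x
    have e : β (sing j) (pair i j) (sing_subset_pair_right i j) (g i j hij x) =
        β (sing i) (pair i j) (sing_subset_pair_left i j) x := by
      rw [hg]
      exact (Equiv.ofBijective _ (hbij i j hij)).apply_symm_apply _
    have c1 := DFunLike.congr_fun
      (hβcomp (sing j) (pair i j) (full I) (sing_subset_pair_right i j)
        (Set.subset_univ _)) (g i j hij x)
    have c2 := DFunLike.congr_fun
      (hβcomp (sing i) (pair i j) (full I) (sing_subset_pair_left i j)
        (Set.subset_univ _)) x
    simp only [Hom.comp_apply] at c1 c2
    rw [← c1, e, c2]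
  constructor
  · intro i x
    apply hinj i
    rw [key]
  · intro i j k hij hjk x
    apply hinj k
    rw [key, key, key]
end

section
/- With the notation of the previous statement, suppose additionally that (A_i, α_i^j) is an I-indexed diagram, A'_P = A_{⋁P} with transition maps f_P^Q = α_{⋁P}^{⋁Q}, and (τ_P)_{P∈𝒫} : Conc ∘ A⃗' → Conc ∘ B⃗ is a natural isomorphism. Then (τ_{{i}})_{i∈I} is a natural isomorphism from Conc ∘ A⃗ to Conc ∘ C⃗, where C⃗ = (C_i, g_i^j) is defined as g_i^j = (β_{{j}}^{{i,j}})^{-1} ∘ β_{{i}}^{{i,j}}. -/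
open FirstOrder FirstOrder.Language FirstOrder.Language.Structure

open FirstOrder FirstOrder.Language AlgCon in
theorem concMap_comp' {L : Language} {A B C : Type*} [L.Structure A] [L.Structure B]
    [L.Structure C] (f : B →[L] C) (g : A →[L] B) (c : Conc L A) :
    concMap (f.comp g) c = concMap f (concMap g c) := by
  refine Subtype.ext (le_antisymm ?_ ?_)
  · refine conMap_le_iff.2 fun x y hxy => ?_
    exact self_le_conGen _ ⟨g x, g y, self_le_conGen _ ⟨x, y, hxy, rfl, rfl⟩, rfl, rfl⟩
  · refine conMap_le_iff.2 ?_
    refine conGen_le ?_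
    rintro x y ⟨u, v, huv, rfl, rfl⟩
    exact self_le_conGen _ ⟨u, v, huv, rfl, rfl⟩

open FirstOrder FirstOrder.Language AlgCon in
theorem concMap_id' {L : Language} {A : Type*} [L.Structure A] (c : Conc L A) :
    concMap (Hom.id L A) c = c := by
  refine Subtype.ext (le_antisymm (conMap_le_iff.2 fun x y hxy => hxy) ?_)
  exact fun x y hxy => self_le_conGen _ ⟨x, y, hxy, rfl, rfl⟩

open FirstOrder FirstOrder.Language AlgCon in
/-- Transporting a natural isomorphism `τ : Conc ∘ A⃗' → Conc ∘ B⃗` along the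
isomorphisms `β_{{j}}^{{i,j}}` yields a natural isomorphism
`(τ_{{i}}) : Conc ∘ A⃗ → Conc ∘ C⃗` where `g_i^j = (β_{{j}}^{{i,j}})⁻¹ ∘ β_{{i}}^{{i,j}}`. -/
theorem statement13 (L : Language) [∀ n, IsEmpty (L.Relations n)]
    (I : Type) [CompleteLattice I] [Fintype I]
    (A : I → Type) [∀ i, L.Structure (A i)]
    (a : ∀ i j : I, i ≤ j → (A i →[L] A j))
    (haid : ∀ i, a i i le_rfl = Hom.id L (A i))
    (hacomp : ∀ (i j k : I) (hij : i ≤ j) (hjk : j ≤ k),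
      (a j k hjk).comp (a i j hij) = a i k (hij.trans hjk))
    (B : PP I → Type) [∀ P, L.Structure (B P)]
    (β : ∀ P Q : PP I, P.val ⊆ Q.val → (B P →[L] B Q))
    (hβid : ∀ P : PP I, β P P subset_rfl = Hom.id L (B P))
    (hβcomp : ∀ (P Q R : PP I) (hPQ : P.val ⊆ Q.val) (hQR : Q.val ⊆ R.val),
      (β Q R hQR).comp (β P Q hPQ) = β P R (hPQ.trans hQR))
    (hinj : ∀ k : I, Function.Injective (β (sing k) (full I) (sing_subset_full k)))
    (γ : ∀ i j : I, i ≤ j → (B (pair i j) →[L] B (sing j)))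
    (hγ₁ : ∀ (i j : I) (hij : i ≤ j),
      (γ i j hij).comp (β (sing j) (pair i j) (sing_subset_pair_right i j)) =
        Hom.id L (B (sing j)))
    (hγ₂ : ∀ (i j : I) (hij : i ≤ j),
      (β (sing j) (pair i j) (sing_subset_pair_right i j)).comp (γ i j hij) =
        Hom.id L (B (pair i j)))
    (τ : ∀ P : PP I, Conc L (A (sSup P.val)) ≃o Conc L (B P))
    (hτnat : ∀ (P Q : PP I) (hPQ : P.val ⊆ Q.val) (c : Conc L (A (sSup P.val))),
      τ Q (concMap (a (sSup P.val) (sSup Q.val) (sSup_le_sSup hPQ)) c) =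
        concMap (β P Q hPQ) (τ P c)) :
    ∀ (i j : I) (hij : i ≤ j) (c : Conc L (A (sSup ({i} : Set I)))),
      τ (sing j)
          (concMap (a (sSup ({i} : Set I)) (sSup ({j} : Set I)) (by simpa using hij)) c) =
        concMap ((γ i j hij).comp (β (sing i) (pair i j) (sing_subset_pair_left i j)))
          (τ (sing i) c) := by
  intro i j hij c
  set x := concMap (a (sSup ({i} : Set I)) (sSup ({j} : Set I)) (by simpa using hij)) c with hxdef
  have h1 := hτnat (sing i) (pair i j) (sing_subset_pair_left i j) c
  have h2 := hτnat (sing j) (pair i j) (sing_subset_pair_right i j) x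
  have hx : concMap (a (sSup (sing j).val) (sSup (pair i j).val)
      (sSup_le_sSup (sing_subset_pair_right i j))) x =
      concMap (a (sSup (sing i).val) (sSup (pair i j).val)
      (sSup_le_sSup (sing_subset_pair_left i j))) c := by
    rw [hxdef]
    refine (concMap_comp' _ _ c).symm.trans ?_
    exact congrArg (fun f => concMap f c) (hacomp _ _ _ _ _)
  rw [hx, h1] at h2
  have h3 := congrArg (concMap (γ i j hij)) h2.symm
  rw [← concMap_comp', ← concMap_comp', hγ₁, concMap_id'] at h3
  exact h3
end
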